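/- arXiv:1907.00092 — 2 statements merged into one kernel-verified Lean document; each statement's English description precedes it below -/
import Mathlib

section
/- Let G be a nontrivial subgroup of PSL(2,ℂ) whose pointwise stabilizer under the conjugation action of PSL(2,ℂ) (i.e., the centralizer of G in PSL(2,ℂ)) is not discrete. Then there exists a nonempty set Λ ⊆ ℂP¹ of cardinality at most 2 that is fixed pointwise by every element of G. -/
open Filter Matrix Topology

noncomputable section

/-- We model PSL(2,ℂ) by SL(2,ℂ) acting on the Riemann sphere `OnePoint ℂ = ℂ ∪ {∞}`
by Möbius transformations (the kernel of the action is the center {±1}). -/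
abbrev SL2C := Matrix.SpecialLinearGroup (Fin 2) ℂ

instance : TopologicalSpace SL2C :=
  TopologicalSpace.induced (fun g => (g : Matrix (Fin 2) (Fin 2) ℂ)) inferInstance

/-- The Möbius action of an element of SL(2,ℂ) on the Riemann sphere ℂP¹ = ℂ ∪ {∞}. -/
def moebius (g : SL2C) : OnePoint ℂ → OnePoint ℂ := fun z =>
  Option.casesOn (show Option ℂ from z)
    (if g.1 1 0 = 0 then (OnePoint.infty : OnePoint ℂ)
     else ((g.1 0 0 / g.1 1 0 : ℂ) : OnePoint ℂ))
    (fun w => if g.1 1 0 * w + g.1 1 1 = 0 then (OnePoint.infty : OnePoint ℂ)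
      else (((g.1 0 0 * w + g.1 0 1) / (g.1 1 0 * w + g.1 1 1) : ℂ) : OnePoint ℂ))

/-- `g` acts as the identity on ℂP¹, i.e. `g` represents the identity of PSL(2,ℂ). -/
def IsIdentity (g : SL2C) : Prop := ∀ z : OnePoint ℂ, moebius g z = z

/-- `g` fixes the point `z` of ℂP¹. -/
def Fixes (g : SL2C) (z : OnePoint ℂ) : Prop := moebius g z = z

/-- The square of the trace; this is a well-defined invariant of an element of PSL(2,ℂ). -/
def trSq (g : SL2C) : ℂ := (Matrix.trace (g : Matrix (Fin 2) (Fin 2) ℂ)) ^ 2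

/-- Elliptic: not the identity (in PSL(2,ℂ)) and tr² ∈ [0,4). -/
def IsElliptic (g : SL2C) : Prop :=
  ¬ IsIdentity g ∧ ∃ r : ℝ, 0 ≤ r ∧ r < 4 ∧ trSq g = (r : ℂ)

/-- Hyperbolic (loxodromic): tr² ∈ ℂ \ [0,4]. -/
def IsHyperbolic (g : SL2C) : Prop :=
  ∀ r : ℝ, 0 ≤ r → r ≤ 4 → trSq g ≠ (r : ℂ)

/-- Parabolic: not the identity in PSL(2,ℂ) and exactly one fixed point on ℂP¹. -/
def IsParabolic (g : SL2C) : Prop := ¬ IsIdentity g ∧ ∃! z : OnePoint ℂ, Fixes g z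

/-- Parabolic, via traces: not the identity in PSL(2,ℂ) and tr² = 4. -/
def IsParabolicTr (g : SL2C) : Prop := ¬ IsIdentity g ∧ trSq g = 4

/-- The (preimage in SL(2,ℂ) of the) pointwise stabilizer (centralizer) of `G`
under the conjugation action of PSL(2,ℂ): all `h` commuting with every `g ∈ G`
as Möbius transformations. -/
def pslCentralizer (G : Subgroup SL2C) : Set SL2C :=
  {h : SL2C | ∀ g ∈ G, ∀ z : OnePoint ℂ, moebius (h * g) z = moebius (g * h) z}

/-!
A non-discrete centralizer contains elements `h ≠ 1` arbitrarily close to `1`; for those, `h ≠ -1`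
and `tr h ≠ 0`. Each `g ∈ G` satisfies `hg = ±gh` as matrices, and the sign is `+` because
conjugation preserves `tr h`. A fixed point of `h` on ℂP¹ is an eigenline of `h`; as `h` is not
scalar, its eigenspaces are lines, which the `g` commuting with `h` preserve. So a single fixed
point of `h` is fixed by all of `G`.
-/

open scoped LinearAlgebra.Projectivization
open Projectivization OnePoint

lemma Subgroup.exists_mem_ne_one_of_not_discreteTopology {G : Type*} [Group G]
    [TopologicalSpace G] [IsTopologicalGroup G] {H : Subgroup G} (hH : ¬DiscreteTopology H)
    {U : Set G} (hU : U ∈ 𝓝 1) : ∃ h ∈ H, h ∈ U ∧ h ≠ 1 := by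
  by_contra! hcon
  obtain ⟨V, hVU, hV, h1V⟩ := mem_nhds_iff.1 hU
  refine hH (discreteTopology_iff_isOpen_singleton_one.2 (isOpen_induced_iff.2 ⟨V, hV, ?_⟩))
  ext ⟨x, hx⟩
  simp only [Set.mem_preimage, Set.mem_singleton_iff, Subgroup.mk_eq_one]
  exact ⟨fun hxV => hcon x hx (hVU hxV), fun h => h ▸ h1V⟩

namespace Projectivization

variable {K V G : Type*} [Field K] [AddCommGroup V] [Module K V]
  [Group G] [DistribMulAction G V] [SMulCommClass G K V]

lemma exists_smul_eq_self [IsAlgClosed K] [FiniteDimensional K V] [Nontrivial V] (g : G) :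
    ∃ p : ℙ K V, g • p = p := by
  obtain ⟨μ, hμ⟩ := Module.End.exists_eigenvalue (DistribSMul.toLinearMap K V g)
  obtain ⟨v, hv⟩ := hμ.exists_hasEigenvector
  refine ⟨mk K v hv.2, ?_⟩
  rw [smul_mk, mk_eq_mk_iff']
  exact ⟨μ, (Module.End.mem_eigenspace_iff.1 hv.1).symm⟩

/-- If `g • v` were not a multiple of the eigenvector `v` of `h`, then `v, g • v` would be a basis
of eigenvectors of `h` for one eigenvalue, so `h` would act trivially. -/
lemma smul_eq_self_of_commute (hV : Module.finrank K V = 2) {g h : G} (hgh : Commute h g)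
    (hh : ∃ q : ℙ K V, h • q ≠ q) {p : ℙ K V} (hp : h • p = p) : g • p = p := by
  induction p using ind with | h v hv =>
  rw [smul_mk, mk_eq_mk_iff'] at hp ⊢
  obtain ⟨μ, hμ⟩ := hp
  by_contra hgv
  have hind : LinearIndependent K ![v, g • v] :=
    (LinearIndependent.pair_iff' hv).2 (by simpa using hgv)
  let b := basisOfLinearIndependentOfCardEqFinrank hind (by simp [hV])
  have hscalar : DistribSMul.toLinearMap K V h = μ • LinearMap.id := by
    refine b.ext fun i => ?_
    fin_cases i
    · simp [b, hμ]
    · simp only [b, coe_basisOfLinearIndependentOfCardEqFinrank]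
      simp [smul_smul, hgh.eq, mul_smul, ← hμ, smul_comm g μ v]
  obtain ⟨q, hq⟩ := hh
  induction q using ind with | h w hw =>
  apply hq
  rw [smul_mk, mk_eq_mk_iff']
  exact ⟨μ, by simpa using (LinearMap.congr_fun hscalar w).symm⟩

end Projectivization

namespace Matrix.SpecialLinearGroup

variable {K n : Type*} [Field K] [Fintype n] [DecidableEq n]

theorem commute_of_inv_mul_mem_center {g h : SpecialLinearGroup n K}
    (hgh : (h * g)⁻¹ * (g * h) ∈ Subgroup.center _) (htr : trace (h : Matrix n n K) ≠ 0) :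
    Commute h g := by
  obtain ⟨r, -, hr⟩ := mem_center_iff.1 hgh
  have hconj : h = g⁻¹ * (h * g) * ((h * g)⁻¹ * (g * h)) := by group
  have htr_eq : trace (h : Matrix n n K) = r * trace (h : Matrix n n K) := by
    conv_lhs => rw [hconj]
    rw [coe_mul _ ((h * g)⁻¹ * (g * h)), ← hr, scalar_apply, ← smul_one_eq_diagonal,
      Matrix.mul_smul, mul_one, trace_smul, smul_eq_mul, coe_mul, trace_mul_comm, ← coe_mul,
      mul_inv_cancel_right]
  have hr1 : r = 1 := by
    have : (r - 1) * trace (h : Matrix n n K) = 0 := by linear_combination -htr_eq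
    simpa [sub_eq_zero, htr] using this
  have : (h * g)⁻¹ * (g * h) = 1 := by
    ext1; rw [← hr, hr1, map_one, coe_one]
  exact inv_mul_eq_one.1 this

end Matrix.SpecialLinearGroup

-- `SL2C` carries its own copy of Mathlib's topology on `SL(2,ℂ)`, hidden from instance search.
instance : IsTopologicalGroup SL2C := Matrix.SpecialLinearGroup.topologicalGroup

local notation "PSL₂ℂ" => Matrix.ProjectiveSpecialLinearGroup (Fin 2) ℂ

lemma moebius_infty (g : SL2C) :
    moebius g ∞ = if g 1 0 = 0 then ∞ else ((g 0 0 / g 1 0 : ℂ) : OnePoint ℂ) := rfl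

lemma moebius_coe (g : SL2C) (w : ℂ) : moebius g w =
    if g 1 0 * w + g 1 1 = 0 then ∞
    else (((g 0 0 * w + g 0 1) / (g 1 0 * w + g 1 1) : ℂ) : OnePoint ℂ) := rfl

lemma equivProjectivization_moebius (g : SL2C) (z : OnePoint ℂ) :
    equivProjectivization ℂ (moebius g z) = g • equivProjectivization ℂ z := by
  rw [← Equiv.eq_symm_apply]
  cases z with
  | infty => simp [moebius_infty, div_eq_inv_mul, Matrix.SpecialLinearGroup.smul_def,
      Matrix.smul_eq_mulVec]
  | coe w => simp [moebius_coe, div_eq_inv_mul, Matrix.SpecialLinearGroup.smul_def,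
      Matrix.smul_eq_mulVec]

lemma isIdentity_iff_forall_smul_eq_self {g : SL2C} :
    IsIdentity g ↔ ∀ p : ℙ ℂ (Fin 2 → ℂ), g • p = p := by
  simp only [IsIdentity, ← (equivProjectivization ℂ).apply_eq_iff_eq,
    equivProjectivization_moebius]
  exact (equivProjectivization ℂ).forall_congr_left.trans (by simp)

lemma moebius_eq_moebius_iff {a b : SL2C} :
    (∀ z, moebius a z = moebius b z) ↔ (a : PSL₂ℂ) = b := by
  calc (∀ z, moebius a z = moebius b z)
      ↔ ∀ z, a • equivProjectivization ℂ z = b • equivProjectivization ℂ z := by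
        simp only [← equivProjectivization_moebius, EmbeddingLike.apply_eq_iff_eq]
    _ ↔ ∀ p : ℙ ℂ (Fin 2 → ℂ), (a : PSL₂ℂ) • p = (b : PSL₂ℂ) • p :=
        (equivProjectivization ℂ).forall_congr_left.trans
          (by simp [ProjectiveSpecialLinearGroup.smul_proj_mk])
    _ ↔ (a : PSL₂ℂ) = b := ⟨eq_of_smul_eq_smul, fun h _ => h ▸ rfl⟩

lemma isIdentity_iff_mem_center {g : SL2C} : IsIdentity g ↔ g ∈ Subgroup.center SL2C := by
  have moebius_one : ∀ z, moebius 1 z = z := fun z => by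
    simp [← (equivProjectivization ℂ).apply_eq_iff_eq, equivProjectivization_moebius]
  rw [IsIdentity, ← QuotientGroup.eq_one_iff, ← QuotientGroup.mk_one, ← moebius_eq_moebius_iff]
  simp only [moebius_one]

lemma pslCentralizer_eq (G : Subgroup SL2C) :
    pslCentralizer G = (Subgroup.centralizer
      (G.map (QuotientGroup.mk' (Subgroup.center SL2C)) : Set PSL₂ℂ)).comap
        (QuotientGroup.mk' _) := by
  ext h
  simp only [pslCentralizer, moebius_eq_moebius_iff]
  simp only [Set.mem_ofPred_eq, SetLike.mem_coe, Subgroup.mem_comap, Subgroup.mem_centralizer_iff,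
    QuotientGroup.coe_mk', Subgroup.coe_map, Set.forall_mem_image, QuotientGroup.mk_mul]
  exact forall₂_congr fun _ _ => eq_comm

lemma commute_of_mem_pslCentralizer {G : Subgroup SL2C} {g h : SL2C} (hh : h ∈ pslCentralizer G)
    (hg : g ∈ G) (htr : trace (h : Matrix (Fin 2) (Fin 2) ℂ) ≠ 0) : Commute h g :=
  Matrix.SpecialLinearGroup.commute_of_inv_mul_mem_center
    (QuotientGroup.eq.1 (moebius_eq_moebius_iff.1 (hh g hg))) htr

lemma exists_mem_pslCentralizer_of_not_discreteTopology {G : Subgroup SL2C}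
    (hZ : ¬DiscreteTopology (pslCentralizer G)) :
    ∃ h ∈ pslCentralizer G, ¬IsIdentity h ∧ trace (h : Matrix (Fin 2) (Fin 2) ℂ) ≠ 0 := by
  rw [pslCentralizer_eq] at hZ ⊢
  -- a trace within distance `2` of `tr 1 = 2` is neither `0` nor `tr (-1) = -2`
  have hU : {h : SL2C | dist (trace (h : Matrix (Fin 2) (Fin 2) ℂ)) 2 < 2} ∈ 𝓝 1 :=
    (isOpen_lt (by fun_prop) continuous_const).mem_nhds (by simp)
  obtain ⟨h, hhZ, hhU, hh1⟩ := Subgroup.exists_mem_ne_one_of_not_discreteTopology hZ hU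
  refine ⟨h, hhZ, ?_, ?_⟩
  · rw [isIdentity_iff_mem_center, Matrix.SpecialLinearGroup.mem_center_iff]
    rintro ⟨r, hr2, hr⟩
    rcases (by simpa using hr2 : r = 1 ∨ r = -1) with rfl | rfl
    · exact hh1 (Subtype.ext (by simp [← hr]))
    · simp [← hr] at hhU
      norm_num [Complex.dist_eq] at hhU
  · intro h0
    simp [h0] at hhU

theorem stmt2_general (G : Subgroup SL2C)
    (hZ : ¬ DiscreteTopology ↥(pslCentralizer G)) :
    ∃ Λ : Finset (OnePoint ℂ), Λ.Nonempty ∧ Λ.card ≤ 2 ∧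
      ∀ g ∈ G, ∀ z ∈ Λ, moebius g z = z := by
  obtain ⟨h, hhZ, hh, htr⟩ := exists_mem_pslCentralizer_of_not_discreteTopology hZ
  obtain ⟨p, hp⟩ := exists_smul_eq_self (K := ℂ) (V := Fin 2 → ℂ) h
  refine ⟨{(equivProjectivization ℂ).symm p}, Finset.singleton_nonempty _,
    (Finset.card_singleton _).trans_le one_le_two, fun g hg z hz => ?_⟩
  rw [Finset.mem_singleton.1 hz, Equiv.eq_symm_apply, equivProjectivization_moebius,
    Equiv.apply_symm_apply]
  refine smul_eq_self_of_commute (by simp) (commute_of_mem_pslCentralizer hhZ hg htr) ?_ hp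
  simpa [isIdentity_iff_forall_smul_eq_self] using hh

/-- if G is a subgroup of PSL(2,ℂ) that is nontrivial (contains an
element acting nontrivially on ℂP¹) and whose centralizer in PSL(2,ℂ) is not
discrete, then there is a nonempty set Λ ⊆ ℂP¹ of cardinality at most 2 fixed
pointwise by every element of G. -/
theorem stmt2 (G : Subgroup SL2C)
    (hnontriv : ∃ g ∈ G, ¬ IsIdentity g)
    (hZ : ¬ DiscreteTopology ↥(pslCentralizer G)) :
    ∃ Λ : Finset (OnePoint ℂ), Λ.Nonempty ∧ Λ.card ≤ 2 ∧
      ∀ g ∈ G, ∀ z ∈ Λ, moebius g z = z :=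
  stmt2_general G hZ

end
end

section
/- Suppose G is a nontrivial subgroup of PSL(2,ℂ) with non-discrete centralizer, and G contains a hyperbolic element h. Then every nonidentity element of G is hyperbolic or elliptic with the same axis as h (i.e., fixes both fixed points of h on ℂP¹), and no element of G exchanges the two fixed points of h. -/
open Filter Matrix Topology

noncomputable section

/-!
Conjugate so that the fixed points `a, b` of `h` become `∞, 0`: elements fixing both are then
diagonal and elements exchanging them antidiagonal. If `diag(x, x⁻¹)` commutes in PSL(2,ℂ) with
an antidiagonal element then `x = ±x⁻¹`, so `x⁴ = 1` and `tr² ∈ {0, 4}`. Hence the centralizer `Z`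
of `G` cannot exchange the fixed points of the hyperbolic `h`, so it fixes them; and if some
`g ∈ G` exchanged them, `Z` would consist of at most four diagonal matrices and be discrete.
Being infinite, `Z` contains a non-identity diagonal element `k`, whose only fixed points are
`a` and `b`; every `g ∈ G` commutes with `k`, so it permutes, hence fixes, `a` and `b`. Finally a
diagonal element with `tr² = 4` is `±1`, so a non-identity `g` is hyperbolic or elliptic.
-/

instance : T2Space SL2C := inferInstanceAs (T2Space {A : Matrix (Fin 2) (Fin 2) ℂ // A.det = 1})

instance : MulAction SL2C (OnePoint ℂ) := MulAction.compHom _ Matrix.SpecialLinearGroup.toGL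

namespace SL2C

open OnePoint

lemma smul_def (g : SL2C) (z : OnePoint ℂ) : g • z = Matrix.SpecialLinearGroup.toGL g • z := rfl

lemma smul_infty (g : SL2C) :
    g • (∞ : OnePoint ℂ) = if g 1 0 = 0 then ∞ else ((g 0 0 / g 1 0 : ℂ) : OnePoint ℂ) := by
  simp only [smul_def, smul_infty_eq_ite, Matrix.SpecialLinearGroup.coe_GL_coe_matrix]
  -- the two sides differ only in the `Decidable` instance of the `if`
  congr

lemma smul_coe (g : SL2C) (w : ℂ) : g • (w : OnePoint ℂ) =
    if g 1 0 * w + g 1 1 = 0 then ∞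
    else (((g 0 0 * w + g 0 1) / (g 1 0 * w + g 1 1) : ℂ) : OnePoint ℂ) := by
  simp only [smul_def, smul_some_eq_ite, Matrix.SpecialLinearGroup.coe_GL_coe_matrix]
  congr

lemma moebius_eq_smul (g : SL2C) (z : OnePoint ℂ) : moebius g z = g • z := by
  cases z with
  | infty => rw [smul_infty]; rfl
  | coe w => rw [smul_coe]; rfl

lemma det_eq_one (g : SL2C) : g 0 0 * g 1 1 - g 0 1 * g 1 0 = 1 := by
  rw [← Matrix.det_fin_two]; exact g.det_coe

lemma smul_infty_eq_infty_iff (g : SL2C) : g • (∞ : OnePoint ℂ) = ∞ ↔ g 1 0 = 0 := by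
  rw [smul_infty]; split_ifs with h <;> simp [h]

lemma smul_infty_eq_zero_iff (g : SL2C) :
    g • (∞ : OnePoint ℂ) = ((0 : ℂ) : OnePoint ℂ) ↔ g 0 0 = 0 := by
  have hdet := det_eq_one g
  rw [smul_infty]
  split_ifs with h
  · simp only [infty_ne_coe, false_iff]
    rintro h0
    simp [h, h0] at hdet
  · simp [h]

lemma smul_zero_eq_zero_iff (g : SL2C) :
    g • ((0 : ℂ) : OnePoint ℂ) = ((0 : ℂ) : OnePoint ℂ) ↔ g 0 1 = 0 := by
  have hdet := det_eq_one g
  rw [smul_coe]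
  split_ifs with h
  · simp only [infty_ne_coe, false_iff]
    rintro h0
    simp_all
  · simp_all

lemma smul_zero_eq_infty_iff (g : SL2C) : g • ((0 : ℂ) : OnePoint ℂ) = ∞ ↔ g 1 1 = 0 := by
  rw [smul_coe]; split_ifs with h <;> simp_all

lemma smul_coe_of_diag {g : SL2C} (h10 : g 1 0 = 0) (h01 : g 0 1 = 0) (w : ℂ) :
    g • (w : OnePoint ℂ) = ((g 0 0 * w / g 1 1 : ℂ) : OnePoint ℂ) := by
  have h11 : g 1 1 ≠ 0 := fun h11 => by simpa [h10, h11] using det_eq_one g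
  simp [smul_coe, h10, h01, h11]

lemma eq_one_or_eq_neg_one_of_diag {g : SL2C} (h10 : g 1 0 = 0) (h01 : g 0 1 = 0)
    (h : g 0 0 = g 1 1) : g = 1 ∨ g = -1 := by
  have hsq : g 0 0 * g 0 0 = 1 := by simpa [h01, ← h] using det_eq_one g
  rcases mul_self_eq_one_iff.1 hsq with h1 | h1
  · left; ext i j; fin_cases i <;> fin_cases j <;> simp [h10, h01, ← h, h1]
  · right; ext i j; fin_cases i <;> fin_cases j <;> simp [h10, h01, ← h, h1]

lemma eq_one_or_eq_neg_one_of_diag_of_fixes {g : SL2C} (h10 : g 1 0 = 0) (h01 : g 0 1 = 0)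
    {w : ℂ} (hw : w ≠ 0) (hfix : g • (w : OnePoint ℂ) = w) : g = 1 ∨ g = -1 := by
  have h11 : g 1 1 ≠ 0 := fun h11 => by simpa [h10, h11] using det_eq_one g
  rw [smul_coe_of_diag h10 h01, coe_eq_coe, div_eq_iff h11, mul_comm w] at hfix
  exact eq_one_or_eq_neg_one_of_diag h10 h01 (mul_right_cancel₀ hw hfix)

lemma eq_one_or_eq_neg_one_of_diag_of_trSq {g : SL2C} (h10 : g 1 0 = 0) (h01 : g 0 1 = 0)
    (htr : trSq g = 4) : g = 1 ∨ g = -1 := by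
  have hdet : g 0 0 * g 1 1 = 1 := by simpa [h01] using det_eq_one g
  rw [trSq, Matrix.trace_fin_two] at htr
  refine eq_one_or_eq_neg_one_of_diag h10 h01 (sub_eq_zero.1 (pow_eq_zero_iff two_ne_zero |>.1 ?_))
  linear_combination htr - 4 * hdet

lemma pow_four_eq_one_of_commute_antidiag {X Y : SL2C} (hX01 : X 0 1 = 0) (hY00 : Y 0 0 = 0)
    (hY11 : Y 1 1 = 0) (hXY : X * Y = Y * X ∨ X * Y = -(Y * X)) :
    X 0 0 ^ 4 = 1 := by
  have hdetX : X 0 0 * X 1 1 = 1 := by simpa [hX01] using det_eq_one X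
  have hY01 : Y 0 1 ≠ 0 := fun h => by simpa [h, hY00] using det_eq_one Y
  have hentry : X 0 0 * Y 0 1 = Y 0 1 * X 1 1 ∨ X 0 0 * Y 0 1 = -(Y 0 1 * X 1 1) := by
    rcases hXY with h | h <;> [left; right] <;>
      simpa [Matrix.mul_apply, hX01, hY00, hY11] using congrArg (fun A : SL2C => A 0 1) h
  rcases hentry with h | h
  · have hx : X 0 0 = X 1 1 := mul_right_cancel₀ hY01 (by linear_combination h)
    linear_combination (X 0 0 ^ 2 + 1) * (X 0 0 * hx + hdetX)
  · have hx : X 0 0 = -X 1 1 := mul_right_cancel₀ hY01 (by linear_combination h)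
    linear_combination (X 0 0 ^ 2 - 1) * (X 0 0 * hx - hdetX)

lemma isIdentity_iff {g : SL2C} : IsIdentity g ↔ g = 1 ∨ g = -1 := by
  simp only [IsIdentity, moebius_eq_smul]
  constructor
  · intro h
    exact eq_one_or_eq_neg_one_of_diag_of_fixes ((smul_infty_eq_infty_iff g).1 (h _))
      ((smul_zero_eq_zero_iff g).1 (h _)) one_ne_zero (h _)
  · rintro (rfl | rfl) z
    · exact one_smul _ _
    · cases z <;> simp [smul_infty, smul_coe]

lemma mem_pslCentralizer_iff {G : Subgroup SL2C} {k : SL2C} :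
    k ∈ pslCentralizer G ↔ ∀ g ∈ G, ∀ z : OnePoint ℂ, k • g • z = g • k • z := by
  simp only [pslCentralizer, Set.mem_ofPred_eq, moebius_eq_smul, mul_smul]

lemma mul_eq_or_eq_neg_of_smul_comm {k g : SL2C}
    (hkg : ∀ z : OnePoint ℂ, k • g • z = g • k • z) : k * g = g * k ∨ k * g = -(g * k) := by
  have hid : IsIdentity (k * g * (g * k)⁻¹) := fun z => by
    rw [moebius_eq_smul, mul_smul, mul_smul, hkg, ← mul_smul g, smul_inv_smul]
  rcases isIdentity_iff.1 hid with h | h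
  · exact Or.inl (mul_inv_eq_one.1 h)
  · exact Or.inr (by rw [mul_inv_eq_iff_eq_mul.1 h, neg_one_mul])

lemma conj_smul_comm (m : SL2C) {k g : SL2C} (hkg : ∀ z : OnePoint ℂ, k • g • z = g • k • z)
    (z : OnePoint ℂ) : (m⁻¹ * k * m) • (m⁻¹ * g * m) • z = (m⁻¹ * g * m) • (m⁻¹ * k * m) • z := by
  simp only [mul_smul, smul_inv_smul, hkg]

lemma conj_smul_eq_iff (m g : SL2C) (w w' : OnePoint ℂ) :
    (m⁻¹ * g * m) • w = w' ↔ g • m • w = m • w' := by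
  rw [mul_smul, mul_smul, inv_smul_eq_iff]

lemma isIdentity_conj_iff (m g : SL2C) : IsIdentity (m⁻¹ * g * m) ↔ IsIdentity g := by
  simp only [IsIdentity, moebius_eq_smul, conj_smul_eq_iff]
  exact ⟨fun h z => by simpa using h (m⁻¹ • z), fun h w => h _⟩

lemma trSq_conj (m g : SL2C) : trSq (m⁻¹ * g * m) = trSq g := by
  simp only [trSq, Matrix.SpecialLinearGroup.coe_mul]
  rw [Matrix.trace_mul_comm, ← Matrix.mul_assoc, ← Matrix.SpecialLinearGroup.coe_mul,
    mul_inv_cancel, Matrix.SpecialLinearGroup.coe_one, Matrix.one_mul]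

lemma exists_smul_infty_eq_and_smul_zero_eq {a b : OnePoint ℂ} (hab : a ≠ b) :
    ∃ m : SL2C, m • ∞ = a ∧ m • ((0 : ℂ) : OnePoint ℂ) = b := by
  cases a with
  | infty =>
    cases b with
    | infty => exact absurd rfl hab
    | coe w => exact ⟨⟨!![1, w; 0, 1], by simp [Matrix.det_fin_two]⟩,
        (smul_infty _).trans (by simp), (smul_coe _ _).trans (by simp)⟩
  | coe u =>
    cases b with
    | infty => exact ⟨⟨!![u, -1; 1, 0], by simp [Matrix.det_fin_two]⟩,
        (smul_infty _).trans (by simp), (smul_coe _ _).trans (by simp)⟩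
    | coe w =>
      have huw : u - w ≠ 0 := sub_ne_zero.2 fun h => hab (by rw [h])
      refine ⟨⟨!![u / (u - w), w; 1 / (u - w), 1], by simp [Matrix.det_fin_two]; field_simp⟩,
        (smul_infty _).trans ?_, (smul_coe _ _).trans (by simp)⟩
      simp [huw]

lemma trSq_eq_zero_or_four_of_pow_four_eq_one {X : SL2C} (h01 : X 0 1 = 0)
    (h4 : X 0 0 ^ 4 = 1) : trSq X = 0 ∨ trSq X = 4 := by
  have hdet : X 0 0 * X 1 1 = 1 := by simpa [h01] using det_eq_one X
  have hsq : (X 0 0 ^ 2 + 1) * (X 0 0 ^ 2 - 1) = 0 := by linear_combination h4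
  rw [trSq, Matrix.trace_fin_two]
  rcases mul_eq_zero.1 hsq with h | h
  · left; linear_combination (1 + X 1 1 ^ 2) * h + (1 - X 0 0 * X 1 1) * hdet
  · right; linear_combination (1 - X 1 1 ^ 2) * h + (X 0 0 * X 1 1 + 3) * hdet

lemma finite_setOf_diag_pow_four_eq_one :
    {X : SL2C | X 1 0 = 0 ∧ X 0 1 = 0 ∧ X 0 0 ^ 4 = 1}.Finite := by
  refine Set.Finite.of_finite_image (f := fun X : SL2C => X 0 0) ?_ ?_
  · refine (Polynomial.nthRoots 4 (1 : ℂ)).toFinset.finite_toSet.subset ?_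
    rintro _ ⟨X, ⟨-, -, hX⟩, rfl⟩
    simpa [Polynomial.mem_nthRoots] using hX
  · rintro X ⟨hX10, hX01, -⟩ Y ⟨hY10, hY01, -⟩ (hXY : X 0 0 = Y 0 0)
    have hdetX : X 0 0 * X 1 1 = 1 := by simpa [hX01] using det_eq_one X
    have hdetY : X 0 0 * Y 1 1 = 1 := by simpa [hY01, hXY] using det_eq_one Y
    have h11 : X 1 1 = Y 1 1 := mul_left_cancel₀ (left_ne_zero_of_mul_eq_one hdetX)
      (hdetX.trans hdetY.symm)
    ext i j; fin_cases i <;> fin_cases j <;> simp [*]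

section Normalization

variable {a b : OnePoint ℂ} {m k g : SL2C}

lemma conj_entries_of_fixes (hma : m • ∞ = a) (hmb : m • ((0 : ℂ) : OnePoint ℂ) = b)
    (hka : k • a = a) (hkb : k • b = b) : (m⁻¹ * k * m) 1 0 = 0 ∧ (m⁻¹ * k * m) 0 1 = 0 :=
  ⟨(smul_infty_eq_infty_iff _).1 (by rw [conj_smul_eq_iff, hma, hka]),
    (smul_zero_eq_zero_iff _).1 (by rw [conj_smul_eq_iff, hmb, hkb])⟩

lemma conj_entries_of_swaps (hma : m • ∞ = a) (hmb : m • ((0 : ℂ) : OnePoint ℂ) = b)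
    (hgab : g • a = b) (hgba : g • b = a) : (m⁻¹ * g * m) 0 0 = 0 ∧ (m⁻¹ * g * m) 1 1 = 0 :=
  ⟨(smul_infty_eq_zero_iff _).1 (by rw [conj_smul_eq_iff, hma, hmb, hgab]),
    (smul_zero_eq_infty_iff _).1 (by rw [conj_smul_eq_iff, hmb, hma, hgba])⟩

lemma conj_pow_four_eq_one (hma : m • ∞ = a) (hmb : m • ((0 : ℂ) : OnePoint ℂ) = b)
    (hka : k • a = a) (hkb : k • b = b) (hgab : g • a = b) (hgba : g • b = a)
    (hkg : ∀ z : OnePoint ℂ, k • g • z = g • k • z) : (m⁻¹ * k * m) 0 0 ^ 4 = 1 :=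
  pow_four_eq_one_of_commute_antidiag (conj_entries_of_fixes hma hmb hka hkb).2
    (conj_entries_of_swaps hma hmb hgab hgba).1 (conj_entries_of_swaps hma hmb hgab hgba).2
    (mul_eq_or_eq_neg_of_smul_comm (conj_smul_comm m hkg))

end Normalization

section FixedPoints

variable {a b : OnePoint ℂ} {k g : SL2C}

lemma fixes_or_swaps_of_smul_comm (hab : a ≠ b) (hfix : ∀ z, g • z = z ↔ z = a ∨ z = b)
    (hkg : ∀ z : OnePoint ℂ, k • g • z = g • k • z) :
    (k • a = a ∧ k • b = b) ∨ (k • a = b ∧ k • b = a) := by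
  have hmaps : ∀ z, g • z = z → k • z = a ∨ k • z = b := fun z hz =>
    (hfix _).1 (by rw [← hkg, hz])
  have hne : k • a ≠ k • b := (MulAction.injective k).ne hab
  rcases hmaps a ((hfix a).2 (Or.inl rfl)) with ha | ha <;>
    rcases hmaps b ((hfix b).2 (Or.inr rfl)) with hb | hb
  all_goals simp_all

lemma not_isHyperbolic_of_smul_comm_of_swaps (hab : a ≠ b) (hka : k • a = a) (hkb : k • b = b)
    (hgab : g • a = b) (hgba : g • b = a) (hkg : ∀ z : OnePoint ℂ, k • g • z = g • k • z) :
    ¬ IsHyperbolic k := by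
  obtain ⟨m, hma, hmb⟩ := exists_smul_infty_eq_and_smul_zero_eq hab
  have htr := trSq_eq_zero_or_four_of_pow_four_eq_one (conj_entries_of_fixes hma hmb hka hkb).2
    (conj_pow_four_eq_one hma hmb hka hkb hgab hgba hkg)
  rw [trSq_conj] at htr
  intro hk
  rcases htr with h | h
  · exact hk 0 le_rfl (by norm_num) (by simp [h])
  · exact hk 4 (by norm_num) le_rfl (by simp [h])

lemma finite_setOf_fixes_smul_comm (hab : a ≠ b) (hgab : g • a = b) (hgba : g • b = a) :
    {k : SL2C | k • a = a ∧ k • b = b ∧ ∀ z : OnePoint ℂ, k • g • z = g • k • z}.Finite := by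
  obtain ⟨m, hma, hmb⟩ := exists_smul_infty_eq_and_smul_zero_eq hab
  refine (finite_setOf_diag_pow_four_eq_one.preimage (f := fun k => m⁻¹ * k * m)
    fun k _ k' _ h => by simpa using h).subset ?_
  rintro k ⟨hka, hkb, hkg⟩
  obtain ⟨h10, h01⟩ := conj_entries_of_fixes hma hmb hka hkb
  exact ⟨h10, h01, conj_pow_four_eq_one hma hmb hka hkb hgab hgba hkg⟩

lemma isIdentity_of_fixes_of_trSq_eq_four (hab : a ≠ b) (hga : g • a = a) (hgb : g • b = b)
    (htr : trSq g = 4) : IsIdentity g := by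
  obtain ⟨m, hma, hmb⟩ := exists_smul_infty_eq_and_smul_zero_eq hab
  obtain ⟨h10, h01⟩ := conj_entries_of_fixes hma hmb hga hgb
  rw [← isIdentity_conj_iff m, isIdentity_iff]
  exact eq_one_or_eq_neg_one_of_diag_of_trSq h10 h01 (by rw [trSq_conj, htr])

lemma smul_eq_self_iff_of_fixes (hab : a ≠ b) (hka : k • a = a) (hkb : k • b = b)
    (hk : ¬ IsIdentity k) (z : OnePoint ℂ) : k • z = z ↔ z = a ∨ z = b := by
  obtain ⟨m, hma, hmb⟩ := exists_smul_infty_eq_and_smul_zero_eq hab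
  obtain ⟨h10, h01⟩ := conj_entries_of_fixes hma hmb hka hkb
  refine ⟨fun hz => ?_, by rintro (rfl | rfl) <;> assumption⟩
  obtain ⟨w, rfl⟩ : ∃ w, m • w = z := ⟨m⁻¹ • z, smul_inv_smul _ _⟩
  have hw : (m⁻¹ * k * m) • w = w := (conj_smul_eq_iff _ _ _ _).2 hz
  cases w with
  | infty => exact Or.inl hma
  | coe u =>
    rcases eq_or_ne u 0 with rfl | hu
    · exact Or.inr hmb
    · refine absurd ((isIdentity_conj_iff m k).1 (isIdentity_iff.2 ?_)) hk
      exact eq_one_or_eq_neg_one_of_diag_of_fixes h10 h01 hu hw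

lemma fixes_of_smul_comm_of_isHyperbolic (hab : a ≠ b) (hfix : ∀ z, g • z = z ↔ z = a ∨ z = b)
    (hg : IsHyperbolic g) (hkg : ∀ z : OnePoint ℂ, k • g • z = g • k • z) :
    k • a = a ∧ k • b = b :=
  (fixes_or_swaps_of_smul_comm hab hfix hkg).resolve_right fun ⟨hkab, hkba⟩ =>
    not_isHyperbolic_of_smul_comm_of_swaps hab ((hfix a).2 (Or.inl rfl)) ((hfix b).2 (Or.inr rfl))
      hkab hkba (fun z => (hkg z).symm) hg

lemma isHyperbolic_or_isElliptic_of_fixes (hab : a ≠ b) (hga : g • a = a) (hgb : g • b = b)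
    (hg : ¬ IsIdentity g) : IsHyperbolic g ∨ IsElliptic g := by
  refine or_iff_not_imp_left.2 fun hnh => ?_
  obtain ⟨r, hr0, hr4, hr⟩ : ∃ r : ℝ, 0 ≤ r ∧ r ≤ 4 ∧ trSq g = r := by
    simpa [_root_.IsHyperbolic] using hnh
  refine ⟨hg, r, hr0, hr4.lt_of_ne fun h4 => hg ?_, hr⟩
  exact isIdentity_of_fixes_of_trSq_eq_four hab hga hgb (by rw [hr, h4]; norm_num)

end FixedPoints

end SL2C

open SL2C

theorem stmt3_general (G : Subgroup SL2C)
    (hZ : ¬ DiscreteTopology ↥(pslCentralizer G))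
    (h : SL2C) (hhG : h ∈ G) (hhyp : IsHyperbolic h)
    (a b : OnePoint ℂ) (hab : a ≠ b)
    (hfix : ∀ z : OnePoint ℂ, Fixes h z ↔ z = a ∨ z = b) :
    (∀ g ∈ G, ¬ IsIdentity g →
        (IsHyperbolic g ∨ IsElliptic g) ∧ Fixes g a ∧ Fixes g b) ∧
    (∀ g ∈ G, ¬ (moebius g a = b ∧ moebius g b = a)) := by
  simp only [Fixes, moebius_eq_smul] at hfix ⊢
  have hZinf : (pslCentralizer G).Infinite := fun hfin => hZ hfin.isDiscrete.to_subtype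
  have hcomm : ∀ k ∈ pslCentralizer G, ∀ g ∈ G, ∀ z : OnePoint ℂ, k • g • z = g • k • z :=
    fun k hk => mem_pslCentralizer_iff.1 hk
  have hZfix : ∀ k ∈ pslCentralizer G, k • a = a ∧ k • b = b := fun k hk =>
    fixes_of_smul_comm_of_isHyperbolic hab hfix hhyp (hcomm k hk h hhG)
  have hswap : ∀ g ∈ G, ¬ (g • a = b ∧ g • b = a) := fun g hg ⟨hgab, hgba⟩ =>
    hZinf ((finite_setOf_fixes_smul_comm hab hgab hgba).subset fun k hk =>
      ⟨(hZfix k hk).1, (hZfix k hk).2, hcomm k hk g hg⟩)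
  obtain ⟨k₀, hk₀, hk₀id⟩ : ∃ k ∈ pslCentralizer G, ¬ IsIdentity k := by
    by_contra! hid
    exact hZinf ((Set.toFinite {1, -1}).subset fun k hk => isIdentity_iff.1 (hid k hk))
  have hk₀fix := smul_eq_self_iff_of_fixes hab (hZfix k₀ hk₀).1 (hZfix k₀ hk₀).2 hk₀id
  refine ⟨fun g hg hgid => ?_, hswap⟩
  obtain ⟨hga, hgb⟩ := (fixes_or_swaps_of_smul_comm hab hk₀fix
    fun z => (hcomm k₀ hk₀ g hg z).symm).resolve_right (hswap g hg)
  exact ⟨isHyperbolic_or_isElliptic_of_fixes hab hga hgb hgid, hga, hgb⟩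

/-- if G ≤ PSL(2,ℂ) is nontrivial with non-discrete centralizer and
contains a hyperbolic element h with fixed-point set {a, b} (a ≠ b), then every
nonidentity element of G is hyperbolic or elliptic with the same axis as h (it
fixes both a and b), and no element of G exchanges a and b. -/
theorem stmt3 (G : Subgroup SL2C)
    (hnontriv : ∃ g ∈ G, ¬ IsIdentity g)
    (hZ : ¬ DiscreteTopology ↥(pslCentralizer G))
    (h : SL2C) (hhG : h ∈ G) (hhyp : IsHyperbolic h)
    (a b : OnePoint ℂ) (hab : a ≠ b)
    (hfix : ∀ z : OnePoint ℂ, Fixes h z ↔ z = a ∨ z = b) :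
    (∀ g ∈ G, ¬ IsIdentity g →
        (IsHyperbolic g ∨ IsElliptic g) ∧ Fixes g a ∧ Fixes g b) ∧
    (∀ g ∈ G, ¬ (moebius g a = b ∧ moebius g b = a)) :=
  stmt3_general G hZ h hhG hhyp a b hab hfix

end
end
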